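/- arXiv:1805.00196 — 3 statements merged into one kernel-verified Lean document; each statement's English description precedes it below -/
import Mathlib

section
/- Every finite solvable group all of whose elements have prime power order belongs to the class 𝒞. -/
/- Common framework for formalizing "A generalization of strongly monomial groups"
   (Bakshi–Kaur).  The rational group algebra ℚG is modelled inside the complex
   group algebra `MonoidAlgebra ℂ G` (rationality of coefficients is imposed
   explicitly where the statements require it). -/

noncomputable section

open MonoidAlgebra

attribute [local instance] Classical.propDecidable

namespace GenStrongMonomial

/-- The field `ℚ(ψ)` generated over `ℚ` by the values of `ψ`. -/
def ratField {α : Type} (ψ : α → ℂ) : IntermediateField ℚ ℂ :=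
  IntermediateField.adjoin ℚ (Set.range ψ)

theorem mem_ratField {α : Type} (ψ : α → ℂ) (a : α) : ψ a ∈ ratField ψ :=
  IntermediateField.subset_adjoin ℚ _ ⟨a, rfl⟩

/-- `Σ_{σ ∈ Gal(ℚ(ψ)/ℚ)} σ(ψ a)`. -/
def galSum {α : Type} (ψ : α → ℂ) (a : α) : ℂ :=
  ∑ᶠ σ : ratField ψ ≃ₐ[ℚ] ratField ψ, ((σ ⟨ψ a, mem_ratField ψ a⟩ : ratField ψ) : ℂ)

variable {G : Type} [Group G] [Fintype G]

/-- The primitive central idempotent `e_ℚ(χ)` attached to a character `χ` of `G`. -/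
def eQG (χ : G → ℂ) : MonoidAlgebra ℂ G :=
  ∑ g : G, single g⁻¹ (χ 1 / (Fintype.card G : ℂ) * galSum χ g)

/-- `e_ℚ(ψ)` for a character `ψ` of a subgroup `S` of `G`, viewed inside `ℚG`. -/
def eQ (S : Subgroup G) (ψ : ↥S → ℂ) : MonoidAlgebra ℂ G :=
  ∑ g : G,
    single g⁻¹ (if h : g ∈ S then ψ 1 / (Nat.card ↥S : ℂ) * galSum ψ ⟨g, h⟩ else 0)

/-- `χ` is an irreducible (complex) character of the group `H`. -/
def IsIrrChar (H : Type) [Group H] (χ : H → ℂ) : Prop :=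
  ∃ V : FDRep ℂ H, CategoryTheory.Simple V ∧ χ = V.character

/-- The induced character `ψ^G` of a character `ψ` of a subgroup `S ≤ G`. -/
def ind (S : Subgroup G) (ψ : ↥S → ℂ) : G → ℂ := fun g =>
  (Nat.card ↥S : ℂ)⁻¹ *
    ∑ x : G, if h : x * g * x⁻¹ ∈ S then ψ ⟨x * g * x⁻¹, h⟩ else 0

/-- The induced character `ψ^T` of a character `ψ` of `S`, induced to a subgroup `T`. -/
def indSub (S T : Subgroup G) (ψ : ↥S → ℂ) : ↥T → ℂ := fun t =>
  (Nat.card ↥S : ℂ)⁻¹ *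
    ∑ x : ↥T, if h : (x : G) * (t : G) * (x : G)⁻¹ ∈ S then ψ ⟨_, h⟩ else 0

/-- Conjugate `α^g = g⁻¹ α g` of an element of the group algebra. -/
def conjQA (α : MonoidAlgebra ℂ G) (g : G) : MonoidAlgebra ℂ G :=
  single g⁻¹ (1 : ℂ) * α * single g (1 : ℂ)

/-- The centralizer `Cen_T(α)` of an element of the group algebra in a subset `T ⊆ G`. -/
def cenIn (T : Set G) (α : MonoidAlgebra ℂ G) : Set G :=
  {g | g ∈ T ∧ single g (1 : ℂ) * α = α * single g (1 : ℂ)}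

/-- The distinct `T`-conjugates of `α` are mutually orthogonal. -/
def MutOrthConj (T : Set G) (α : MonoidAlgebra ℂ G) : Prop :=
  ∀ g ∈ T, ∀ h ∈ T, conjQA α g ≠ conjQA α h → conjQA α g * conjQA α h = 0

/-- `ψ ∈ Irr(S)` is a strong inductive source of `G`. -/
def IsSISG (S : Subgroup G) (ψ : ↥S → ℂ) : Prop :=
  IsIrrChar G (ind S ψ) ∧
  (↑S : Set G) ⊆ cenIn Set.univ (eQ S ψ) ∧
  (∀ c ∈ cenIn Set.univ (eQ S ψ), ∀ s ∈ S, c * s * c⁻¹ ∈ S) ∧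
  MutOrthConj Set.univ (eQ S ψ)

/-- `ψ ∈ Irr(S)` is a strong inductive source of the subgroup `T` of `G`. -/
def IsSIS (S T : Subgroup G) (ψ : ↥S → ℂ) : Prop :=
  S ≤ T ∧
  IsIrrChar ↥T (indSub S T ψ) ∧
  (↑S : Set G) ⊆ cenIn ↑T (eQ S ψ) ∧
  (∀ c ∈ cenIn ↑T (eQ S ψ), ∀ s ∈ S, c * s * c⁻¹ ∈ S) ∧
  MutOrthConj ↑T (eQ S ψ)

/-- `K` is a normal subgroup of `H` (inside the ambient group `G`). -/
def IsNormalIn (K H : Subgroup G) : Prop :=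
  K ≤ H ∧ ∀ h ∈ H, ∀ k ∈ K, h * k * h⁻¹ ∈ K

/-- The quotient `H/K` is cyclic. -/
def IsCyclicQuot (H K : Subgroup G) : Prop :=
  ∃ h ∈ H, ∀ x ∈ H, ∃ n : ℤ, (h ^ n)⁻¹ * x ∈ K

/-- `(H, K)` is a Shoda pair of `G`. -/
def IsShodaPair (H K : Subgroup G) : Prop :=
  IsNormalIn K H ∧ IsCyclicQuot H K ∧
  ∀ g : G,
    (∀ h ∈ H, h⁻¹ * g⁻¹ * h * g ∈ H → h⁻¹ * g⁻¹ * h * g ∈ K) → g ∈ H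

/-- `lam ∈ Lin(H, K)`: a linear character of `H` with kernel `K`. -/
def IsLinCharWK (H K : Subgroup G) (lam : ↥H → ℂ) : Prop :=
  (∀ a b : ↥H, lam (a * b) = lam a * lam b) ∧ lam 1 = 1 ∧
  ∀ h : ↥H, lam h = lam 1 ↔ (h : G) ∈ K

/-- A strong inductive chain from `H` to `G` for the character `lam` of `H`. -/
def IsStrongInductiveChain (H : Subgroup G) (lam : ↥H → ℂ) {n : ℕ}
    (Hc : Fin (n + 1) → Subgroup G) : Prop :=
  Hc 0 = H ∧ Hc (Fin.last n) = ⊤ ∧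
  ∀ i : Fin n, IsSIS (Hc i.castSucc) (Hc i.succ) (indSub H (Hc i.castSucc) lam)

/-- `(H, K)` is a generalized strong Shoda pair of `G`. -/
def IsGSSP (H K : Subgroup G) : Prop :=
  IsShodaPair H K ∧
  ∀ lam : ↥H → ℂ, IsLinCharWK H K lam →
    ∃ (n : ℕ) (Hc : Fin (n + 1) → Subgroup G), IsStrongInductiveChain H lam Hc

/-- `G` is generalized strongly monomial. -/
def IsGenStronglyMonomial (G : Type) [Group G] [Fintype G] : Prop :=
  ∀ χ : G → ℂ, IsIrrChar G χ →
    ∃ (H K : Subgroup G) (lam : ↥H → ℂ),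
      IsGSSP H K ∧ IsLinCharWK H K lam ∧ χ = ind H lam

/-- `Â = (1/|A|) Σ_{a ∈ A} a` in the group algebra. -/
def hatQ (A : Subgroup G) : MonoidAlgebra ℂ G :=
  (Nat.card ↥A : ℂ)⁻¹ • ∑ a : ↥A, single (a : G) (1 : ℂ)

/-- `L` is a minimal normal subgroup of `H` containing `K` properly. -/
def IsMinNormalAbove (H K L : Subgroup G) : Prop :=
  K < L ∧ IsNormalIn L H ∧
  ∀ L' : Subgroup G, K < L' → L' ≤ L → IsNormalIn L' H → L' = L

/-- `ε(H, K) = K̂` if `H = K`, and `Π_L (K̂ - L̂)` otherwise (`L` running over the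
minimal normal subgroups of `H` containing `K` properly); the factors commute, so
taking the product in an arbitrarily fixed order is harmless. -/
def epsQ (H K : Subgroup G) : MonoidAlgebra ℂ G :=
  letI : Finite (Subgroup G) :=
    Finite.of_injective (fun A : Subgroup G => (A : Set G)) SetLike.coe_injective
  letI : Fintype (Subgroup G) := Fintype.ofFinite _
  if H = K then hatQ K
  else (((Finset.univ.filter fun L => IsMinNormalAbove H K L).toList).map
    fun L => hatQ K - hatQ L).prod

/-- `e(A, H, K)`: the sum of the distinct `A`-conjugates of `ε(H, K)`. -/
def eGHK (A H K : Subgroup G) : MonoidAlgebra ℂ G :=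
  ∑ β ∈ Finset.image (fun a : ↥A => conjQA (epsQ H K) (a : G)) Finset.univ, β

/-- `(H, K)` is a strong Shoda pair of `G`. -/
def IsSSP (H K : Subgroup G) : Prop :=
  IsShodaPair H K ∧
  (↑H : Set G) ⊆ cenIn Set.univ (epsQ H K) ∧
  (∀ c ∈ cenIn Set.univ (epsQ H K), ∀ h ∈ H, c * h * c⁻¹ ∈ H) ∧
  MutOrthConj Set.univ (epsQ H K)

/-- `G` is strongly monomial. -/
def IsStronglyMonomial (G : Type) [Group G] [Fintype G] : Prop :=
  ∀ χ : G → ℂ, IsIrrChar G χ →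
    ∃ (H K : Subgroup G) (lam : ↥H → ℂ),
      IsSSP H K ∧ IsLinCharWK H K lam ∧ χ = ind H lam

/-- The class `𝒞`: every quotient of every subgroup of `G` (i.e. every section `H/N`
with `N ⊴ H ≤ G`) is either abelian, or contains a non-central abelian normal
subgroup (`A/N` with `N ≤ A ≤ H`). -/
def InClassC (G : Type) [Group G] : Prop :=
  ∀ H N : Subgroup G, IsNormalIn N H →
    ((∀ a ∈ H, ∀ b ∈ H, a⁻¹ * b⁻¹ * a * b ∈ N) ∨
      ∃ A : Subgroup G, N ≤ A ∧ A ≤ H ∧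
        (∀ h ∈ H, ∀ a ∈ A, h * a * h⁻¹ ∈ A) ∧
        (∀ a ∈ A, ∀ b ∈ A, a⁻¹ * b⁻¹ * a * b ∈ N) ∧
        ∃ a ∈ A, ∃ h ∈ H, a⁻¹ * h⁻¹ * a * h ∉ N)

/-- The standard inner product of two class functions on a finite group. -/
def innerChar (H : Type) [Fintype H] (χ φ : H → ℂ) : ℂ :=
  (Fintype.card H : ℂ)⁻¹ * ∑ h : H, χ h * (starRingEnd ℂ) (φ h)

/-- The conjugate character `φ^g` of a character `φ` of a normal subgroup `N`,
given by `φ^g(n) = φ(g n g⁻¹)`. -/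
def conjCharN (N : Subgroup G) (hN : N.Normal) (φ : ↥N → ℂ) (g : G) : ↥N → ℂ :=
  fun n => φ ⟨g * (n : G) * g⁻¹, hN.conj_mem (n : G) n.2 g⟩

/-- The inertia group `I_G(φ)` of a character `φ` of a normal subgroup `N ⊴ G`. -/
def inertia (N : Subgroup G) (hN : N.Normal) (φ : ↥N → ℂ) : Subgroup G where
  carrier := {g | conjCharN N hN φ g = φ}
  one_mem' := by
    show conjCharN N hN φ 1 = φ
    funext n
    show φ ⟨1 * (n : G) * 1⁻¹, _⟩ = φ n
    exact congrArg φ (Subtype.ext (by group))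
  mul_mem' := by
    intro a b ha hb
    show conjCharN N hN φ (a * b) = φ
    have ha' : conjCharN N hN φ a = φ := ha
    have hb' : conjCharN N hN φ b = φ := hb
    funext n
    have key : a * b * (n : G) * (a * b)⁻¹ = a * (b * (n : G) * b⁻¹) * a⁻¹ := by group
    have hmem : a * (b * (n : G) * b⁻¹) * a⁻¹ ∈ N := by
      rw [← key]; exact hN.conj_mem _ n.2 _
    calc conjCharN N hN φ (a * b) n
        = φ ⟨a * (b * (n : G) * b⁻¹) * a⁻¹, hmem⟩ := congrArg φ (Subtype.ext key)
      _ = conjCharN N hN φ a ⟨b * (n : G) * b⁻¹, hN.conj_mem _ n.2 _⟩ := rfl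
      _ = φ ⟨b * (n : G) * b⁻¹, hN.conj_mem _ n.2 _⟩ := by rw [ha']
      _ = conjCharN N hN φ b n := rfl
      _ = φ n := by rw [hb']
  inv_mem' := by
    intro a ha
    have ha' : conjCharN N hN φ a = φ := ha
    show conjCharN N hN φ a⁻¹ = φ
    funext n
    have h2 : a⁻¹ * (n : G) * a ∈ N := by
      have := hN.conj_mem (n : G) n.2 a⁻¹
      simpa using this
    have h3 := congrFun ha' ⟨a⁻¹ * (n : G) * a, h2⟩
    have h4 : a * (a⁻¹ * (n : G) * a) * a⁻¹ = (n : G) := by group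
    have h5 : φ (⟨a⁻¹ * (n : G) * a, h2⟩ : ↥N) = φ n := by
      rw [← h3]
      exact congrArg φ (Subtype.ext h4)
    calc conjCharN N hN φ a⁻¹ n
        = φ ⟨a⁻¹ * (n : G) * a, h2⟩ := congrArg φ (Subtype.ext (by group))
      _ = φ n := h5

/-- `H` is a subnormal subgroup of `G`. -/
def IsSubnormal (H : Subgroup G) : Prop :=
  ∃ (n : ℕ) (c : Fin (n + 1) → Subgroup G), c 0 = H ∧ c (Fin.last n) = ⊤ ∧
    ∀ i : Fin n, IsNormalIn (c i.castSucc) (c i.succ)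

/-- A linear character of a subgroup `H`. -/
def IsLinChar (H : Subgroup G) (lam : ↥H → ℂ) : Prop :=
  (∀ a b : ↥H, lam (a * b) = lam a * lam b) ∧ lam 1 = 1

/-- `G` is subnormally monomial. -/
def IsSubnormallyMonomial (G : Type) [Group G] [Fintype G] : Prop :=
  ∀ χ : G → ℂ, IsIrrChar G χ →
    ∃ (H : Subgroup G) (lam : ↥H → ℂ),
      IsSubnormal H ∧ IsLinChar H lam ∧ χ = ind H lam

end GenStrongMonomial
namespace GenStrongMonomial

variable {G : Type} [Group G] [Fintype G]

/-- `ℤT`: elements of the group algebra with integer coefficients supported in `T`. -/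
def ZSet (T : Set G) : Set (MonoidAlgebra ℂ G) :=
  {β | (∀ g : G, β.coeff g ≠ 0 → g ∈ T) ∧ ∀ g : G, ∃ n : ℤ, β.coeff g = (n : ℂ)}

/-- `ℚT`: elements of the group algebra with rational coefficients supported in `T`. -/
def QSet (T : Set G) : Set (MonoidAlgebra ℂ G) :=
  {β | (∀ g : G, β.coeff g ≠ 0 → g ∈ T) ∧ ∀ g : G, ∃ q : ℚ, β.coeff g = (q : ℂ)}

/-- The corner `ℚT·e = {γe : γ ∈ ℚT}`. -/
def cornerSet (T : Set G) (e : MonoidAlgebra ℂ G) : Set (MonoidAlgebra ℂ G) :=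
  (fun γ => γ * e) '' QSet T

/-- The center of a (sub)ring given as a subset of the group algebra. -/
def centerOf (A : Set (MonoidAlgebra ℂ G)) : Set (MonoidAlgebra ℂ G) :=
  {x ∈ A | ∀ y ∈ A, x * y = y * x}

/-- The order `ℤ(1 - e) + ℤT·e`. -/
def orderSet (T : Set G) (e : MonoidAlgebra ℂ G) : Set (MonoidAlgebra ℂ G) :=
  {x | ∃ (a : ℤ) (β : MonoidAlgebra ℂ G), β ∈ ZSet T ∧ x = (a : ℂ) • (1 - e) + β * e}

/-- The unit group `U(A)` of a subring `A`, as a subset. -/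
def unitsOf (A : Set (MonoidAlgebra ℂ G)) : Set (MonoidAlgebra ℂ G) :=
  {x ∈ A | ∃ y ∈ A, x * y = 1 ∧ y * x = 1}

/-- The group of central units `Z(U(A))`. -/
def centerOfUnits (A : Set (MonoidAlgebra ℂ G)) : Set (MonoidAlgebra ℂ G) :=
  {x ∈ unitsOf A | ∀ y ∈ unitsOf A, x * y = y * x}

/-- `B` is a subgroup of (the group whose underlying set is) `X`. -/
def IsSubgroupSet (B X : Set (MonoidAlgebra ℂ G)) : Prop :=
  B ⊆ X ∧ (1 : MonoidAlgebra ℂ G) ∈ B ∧ (∀ a ∈ B, ∀ b ∈ B, a * b ∈ B) ∧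
    ∀ a ∈ B, ∃ b ∈ B, a * b = 1 ∧ b * a = 1

/-- `B` has finite index in `X`: finitely many cosets `f·B` cover `X`. -/
def FiniteIndexIn (B X : Set (MonoidAlgebra ℂ G)) : Prop :=
  ∃ F : Finset (MonoidAlgebra ℂ G), ∀ x ∈ X, ∃ f ∈ F, ∃ b ∈ B, x = f * b

/-- The subgroup generated by a set `X` of invertible elements, as a subset:
the smallest subset containing `X`, containing `1`, closed under products and
under (two-sided) inverses. -/
def genSubgroup (X : Set (MonoidAlgebra ℂ G)) : Set (MonoidAlgebra ℂ G) :=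
  ⋂₀ {A | X ⊆ A ∧ 1 ∈ A ∧ (∀ a ∈ A, ∀ b ∈ A, a * b ∈ A) ∧
      ∀ a ∈ A, ∀ b : MonoidAlgebra ℂ G, a * b = 1 → b * a = 1 → b ∈ A}

/-- Product of the values of `f` over a finite set of group elements (the products
occurring below have pairwise commuting factors, so any fixed order is harmless). -/
def setProd (F : Finset G) (f : G → MonoidAlgebra ℂ G) : MonoidAlgebra ℂ G :=
  (F.toList.map f).prod

/-- The Bass unit `u_{k,m}(g)`, viewed inside the complex group algebra. -/
def bassC (g : G) (k m : ℕ) : MonoidAlgebra ℂ G :=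
  (∑ i ∈ Finset.range k, single (g ^ i) (1 : ℂ)) ^ m +
    (((1 - (k : ℤ) ^ m) / (orderOf g : ℤ) : ℤ) : ℂ) •
      ∑ i ∈ Finset.range (orderOf g), single (g ^ i) (1 : ℂ)

/-- The element `b = 1 - M̂ + u_{k,m}(g)·M̂`. -/
def bEltC (g : G) (k m : ℕ) (M : Subgroup G) : MonoidAlgebra ℂ G :=
  1 - hatQ M + bassC g k m * hatQ M

/-- The set of generalized Bass units of `ℤH` based on elements `h ∈ H` and the
commutator subgroup `H' = ⁅H,H⁆`: the minimal powers `b^{n_b} ∈ U(ℤH)` of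
`b = u_{k,m}(1 - Ĥ' + hĤ')`. -/
def genBassSetRel (H : Subgroup G) : Set (MonoidAlgebra ℂ G) :=
  {x | ∃ (h : G) (k m : ℕ), h ∈ H ∧ 0 < k ∧ 0 < m ∧ k ^ m ≡ 1 [MOD orderOf h] ∧
    ∃ n : ℕ, 0 < n ∧ x = bEltC h k m ⁅H, H⁆ ^ n ∧ x ∈ unitsOf (ZSet ↑H) ∧
      ∀ n' : ℕ, 0 < n' → n' < n → bEltC h k m ⁅H, H⁆ ^ n' ∉ unitsOf (ZSet ↑H)}

/-- The set of all generalized Bass units of `ℤG` (based on `g ∈ G` and a normal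
subgroup `M ⊴ G`). -/
def genBassSetG (G : Type) [Group G] [Fintype G] : Set (MonoidAlgebra ℂ G) :=
  {x | ∃ (g : G) (k m : ℕ) (M : Subgroup G), M.Normal ∧ 0 < k ∧ 0 < m ∧
      k ^ m ≡ 1 [MOD orderOf g] ∧
    ∃ n : ℕ, 0 < n ∧ x = bEltC g k m M ^ n ∧ x ∈ unitsOf (ZSet Set.univ) ∧
      ∀ n' : ℕ, 0 < n' → n' < n → bEltC g k m M ^ n' ∉ unitsOf (ZSet Set.univ)}

/-- The set of Bass units of `ℤG`. -/
def bassSetG (G : Type) [Group G] [Fintype G] : Set (MonoidAlgebra ℂ G) :=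
  {x | ∃ (g : G) (k m : ℕ), 0 < k ∧ 0 < m ∧ k ^ m ≡ 1 [MOD orderOf g] ∧ x = bassC g k m}

/-- The least center property of the strong inductive source `ψ ∈ Irr(S)` w.r.t. the
subgroup `T`:  `Z(ℚC·e_ℚ(ψ)) = Z(ℚS·e_ℚ(ψ))^{C/S}` where `C = Cen_T(e_ℚ(ψ))`. -/
def LeastCenterStep (S T : Subgroup G) (ψ : ↥S → ℂ) : Prop :=
  centerOf (cornerSet (cenIn ↑T (eQ S ψ)) (eQ S ψ)) =
    {x ∈ centerOf (cornerSet ↑S (eQ S ψ)) | ∀ c ∈ cenIn ↑T (eQ S ψ), conjQA x c = x}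

/-- The least center property of `ψ ∈ Irr(S)` w.r.t. the whole group `G`. -/
def LeastCenterPropG (S : Subgroup G) (ψ : ↥S → ℂ) : Prop :=
  centerOf (cornerSet (cenIn Set.univ (eQ S ψ)) (eQ S ψ)) =
    {x ∈ centerOf (cornerSet ↑S (eQ S ψ)) |
      ∀ c ∈ cenIn Set.univ (eQ S ψ), conjQA x c = x}

/-- The iterated construction `z_i^{𝒩}(u)` of central units along a chain `Hc`
(with `Hc 0 = H`), using the transversals `Ts j` of `C_j = Cen_{H_{j+1}}(e_ℚ(λ^{H_j}))`
in `H_{j+1}`:  `z_{j+1} = Π_{t ∈ T_j} (Π_{c ∈ C_j} z_j^c)^t`. -/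
def zIter (H : Subgroup G) (lam : ↥H → ℂ) (Hc : ℕ → Subgroup G) (Ts : ℕ → Finset G)
    (u : MonoidAlgebra ℂ G) : ℕ → MonoidAlgebra ℂ G
  | 0 => u
  | j + 1 =>
    setProd (Ts j) fun t =>
      conjQA
        (setProd
          (Set.toFinite (cenIn ↑(Hc (j + 1)) (eQ (Hc j) (indSub H (Hc j) lam)))).toFinset
          fun c => conjQA (zIter H lam Hc Ts u j) c) t

/-- The iterated construction `c_i^{𝒩}(u)` along a subnormal series, using the
transversals `Ts j` of `H_j` in `H_{j+1}`:  `c_{j+1} = Π_{t ∈ T_j} c_j^t`. -/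
def cIter (Ts : ℕ → Finset G) (u : MonoidAlgebra ℂ G) : ℕ → MonoidAlgebra ℂ G
  | 0 => u
  | j + 1 => setProd (Ts j) fun t => conjQA (cIter Ts u j) t

end GenStrongMonomial

/-! Membership in `𝒞` only concerns sections `H/N`, which are again solvable with all elements
of prime power order, so it suffices to find a non-central abelian normal subgroup in every
such nonabelian group `Q`. If `Z(Q) = 1`, the last nontrivial term of the derived series
works. Otherwise a central element of order `p^k` forces every element to be a `p`-element
(a commuting product of elements of coprime orders `≠ 1` has no prime power order), so `Q` is
a `p`-group; then `Q/Z(Q)` has a nontrivial central element `xZ(Q)`, and the preimage of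
`⟨xZ(Q)⟩` is abelian (cyclic modulo a central subgroup), normal, and contains `x ∉ Z(Q)`. -/

open Subgroup

-- EPPO: every element has prime power order.
def IsEPPOGroup (G : Type*) [Group G] : Prop :=
  ∀ g : G, g = 1 ∨ IsPrimePow (orderOf g)

namespace IsEPPOGroup

variable {G H : Type*} [Group G] [Group H]

theorem of_injective {f : H →* G} (hf : Function.Injective f) (hG : IsEPPOGroup G) :
    IsEPPOGroup H := fun h =>
  (hG (f h)).imp (fun h1 => hf (by rw [h1, map_one])) (orderOf_injective f hf h ▸ ·)

theorem of_surjective {f : G →* H} (hf : Function.Surjective f) (hG : IsEPPOGroup G) :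
    IsEPPOGroup H := by
  intro h
  obtain ⟨g, rfl⟩ := hf h
  refine or_iff_not_imp_left.2 fun hfg => ?_
  have hg : g ≠ 1 := fun hg => hfg (by rw [hg, map_one])
  exact ((hG g).resolve_left hg).dvd (orderOf_map_dvd f g) (mt orderOf_eq_one_iff.1 hfg)

theorem orderOf_pos (hG : IsEPPOGroup G) (g : G) : 0 < orderOf g := by
  rcases hG g with rfl | hg
  · simp
  · exact hg.pos

theorem eq_one_or_eq_one_of_commute (hG : IsEPPOGroup G) {a b : G} (hab : Commute a b)
    (hcop : (orderOf a).Coprime (orderOf b)) : a = 1 ∨ b = 1 := by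
  by_contra! hne
  have hmul : orderOf (a * b) = orderOf a * orderOf b :=
    hab.orderOf_mul_eq_mul_orderOf_of_coprime hcop
  have ha : orderOf a ≠ 1 := mt orderOf_eq_one_iff.1 hne.1
  have hb : orderOf b ≠ 1 := mt orderOf_eq_one_iff.1 hne.2
  rcases hG (a * b) with hab1 | hpow
  · rw [hab1, orderOf_one] at hmul
    exact ha (Nat.eq_one_of_mul_eq_one_right hmul.symm)
  · rw [hmul] at hpow
    rcases (hcop.isPrimePow_dvd_mul hpow).1 dvd_rfl with hd | hd
    · exact hb <| Nat.eq_one_of_dvd_one <|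
        (Nat.mul_dvd_mul_iff_left (hG.orderOf_pos a)).1 (by simpa using hd)
    · exact ha <| Nat.eq_one_of_dvd_one <|
        (Nat.mul_dvd_mul_iff_right (hG.orderOf_pos b)).1 (by simpa using hd)

theorem exists_isPGroup_of_center_ne_bot (hG : IsEPPOGroup G) (hZ : center G ≠ ⊥) :
    ∃ p : ℕ, p.Prime ∧ IsPGroup p G := by
  obtain ⟨⟨z, hz⟩, hz1⟩ := ne_bot_iff_exists_ne_one.1 hZ
  have hz1 : z ≠ 1 := fun h => hz1 (Subtype.ext h)
  obtain ⟨p, k, hp, -, hzk⟩ := (hG z).resolve_left hz1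
  refine ⟨p, hp.nat_prime, fun g => ?_⟩
  rcases hG g with rfl | hg
  · exact ⟨0, one_pow _⟩
  obtain ⟨r, j, hr, -, hgj⟩ := id hg
  obtain rfl : r = p := by
    by_contra hrp
    have hcop : (orderOf z).Coprime (orderOf g) := by
      rw [← hzk, ← hgj]
      exact ((Nat.coprime_primes hp.nat_prime hr.nat_prime).2 (Ne.symm hrp)).pow k j
    rcases hG.eq_one_or_eq_one_of_commute (mem_center_iff.1 hz g).symm hcop with h | h
    · exact hz1 h
    · exact not_isPrimePow_one (by simpa [h] using hg)
  exact ⟨j, hgj ▸ pow_orderOf_eq_one g⟩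

end IsEPPOGroup

section GroupTheory

variable {G : Type*} [Group G]

theorem exists_normal_isMulCommutative_ne_bot [Group.IsSolvable G] [Nontrivial G] :
    ∃ A : Subgroup G, A.Normal ∧ IsMulCommutative A ∧ A ≠ ⊥ := by
  have hsolv := Group.IsSolvable.solvable (G := G)
  obtain ⟨m, hm⟩ : ∃ m, Nat.find hsolv = m + 1 := by
    refine Nat.exists_eq_succ_of_ne_zero fun h0 => ?_
    have := Nat.find_spec hsolv
    rw [h0, derivedSeries_zero] at this
    exact top_ne_bot this
  refine ⟨derivedSeries G m, derivedSeries_normal G m, ?_, Nat.find_min hsolv (by omega)⟩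
  rw [← commutator_self_eq_bot_iff, ← derivedSeries_succ, ← hm]
  exact Nat.find_spec hsolv

theorem exists_normal_isMulCommutative_not_le_center_of_nontrivial_center_quotient
    [Nontrivial (center (G ⧸ center G))] :
    ∃ A : Subgroup G, A.Normal ∧ IsMulCommutative A ∧ ¬ A ≤ center G := by
  obtain ⟨⟨xbar, hxbar⟩, hx1⟩ := exists_ne (1 : center (G ⧸ center G))
  obtain ⟨x, rfl⟩ := QuotientGroup.mk_surjective xbar
  let π := QuotientGroup.mk' (center G)
  have hnormal : (zpowers (x : G ⧸ center G)).Normal :=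
    ⟨fun y hy g => by rwa [mem_center_iff.1 (zpowers_le.2 hxbar hy) g, mul_inv_cancel_right]⟩
  refine ⟨(zpowers (x : G ⧸ center G)).comap π, hnormal.comap π, ?_, ?_⟩
  · -- `A / (A ∩ Z(G))` embeds in the cyclic group `⟨x̄⟩`, and `A ∩ Z(G)` is central in `A`
    refine (π.subgroupComap _).isMulCommutative_of_isCyclic_of_ker_le_center fun a ha => ?_
    have haZ : (a : G) ∈ center G := (QuotientGroup.eq_one_iff _).1 (congrArg Subtype.val ha)
    exact mem_center_iff.2 fun b => Subtype.ext (mem_center_iff.1 haZ b)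
  · intro h
    exact hx1 (Subtype.ext ((QuotientGroup.eq_one_iff x).2 (h (mem_zpowers _))))

theorem IsPGroup.exists_normal_isMulCommutative_not_le_center [Finite G] {p : ℕ}
    [Fact p.Prime] (hG : IsPGroup p G) (hZ : center G ≠ ⊤) :
    ∃ A : Subgroup G, A.Normal ∧ IsMulCommutative A ∧ ¬ A ≤ center G := by
  have : Nontrivial (G ⧸ center G) := QuotientGroup.nontrivial_iff.2 hZ
  have := (hG.to_quotient (center G)).center_nontrivial
  exact exists_normal_isMulCommutative_not_le_center_of_nontrivial_center_quotient

theorem IsEPPOGroup.exists_normal_isMulCommutative_not_le_center [Finite G]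
    [Group.IsSolvable G] (hG : IsEPPOGroup G) (hZ : center G ≠ ⊤) :
    ∃ A : Subgroup G, A.Normal ∧ IsMulCommutative A ∧ ¬ A ≤ center G := by
  by_cases hZ₁ : center G = ⊥
  · have : Nontrivial G := by
      by_contra h
      rw [not_nontrivial_iff_subsingleton] at h
      exact hZ (Subsingleton.elim _ _)
    obtain ⟨A, hA, hAc, hA₁⟩ := exists_normal_isMulCommutative_ne_bot (G := G)
    exact ⟨A, hA, hAc, fun h => hA₁ (le_bot_iff.1 (hZ₁ ▸ h))⟩
  · obtain ⟨p, hp, hGp⟩ := hG.exists_isPGroup_of_center_ne_bot hZ₁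
    have := Fact.mk hp
    exact hGp.exists_normal_isMulCommutative_not_le_center hZ

theorem QuotientGroup.commute_mk_iff {N : Subgroup G} [N.Normal] (x y : G) :
    Commute (x : G ⧸ N) y ↔ x⁻¹ * y⁻¹ * x * y ∈ N := by
  rw [Commute, SemiconjBy, ← QuotientGroup.mk_mul, ← QuotientGroup.mk_mul, eq_comm,
    QuotientGroup.eq]
  simp only [mul_inv_rev, mul_assoc]

end GroupTheory

section ClassC

variable {G : Type} [Group G]

theorem GenStrongMonomial.IsNormalIn.normal_subgroupOf {N H : Subgroup G}
    (h : GenStrongMonomial.IsNormalIn N H) : (N.subgroupOf H).Normal :=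
  ⟨fun n hn g => h.2 g g.2 n hn⟩

theorem inClassC_of_forall_quotient
    (h : ∀ (H : Subgroup G) (N : Subgroup H) [N.Normal], center (H ⧸ N) = ⊤ ∨
      ∃ A : Subgroup (H ⧸ N), A.Normal ∧ IsMulCommutative A ∧ ¬ A ≤ center (H ⧸ N)) :
    GenStrongMonomial.InClassC G := by
  intro H N hNH
  have := hNH.normal_subgroupOf
  have hcomm (x y : H) :
      Commute (x : H ⧸ N.subgroupOf H) y ↔ (x : G)⁻¹ * (y : G)⁻¹ * x * y ∈ N :=
    QuotientGroup.commute_mk_iff x y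
  rcases h H (N.subgroupOf H) with hQ | ⟨A, hA, hAc, hAZ⟩
  · left
    intro a ha b hb
    exact (hcomm ⟨a, ha⟩ ⟨b, hb⟩).1 (mem_center_iff.1 (hQ ▸ mem_top _) _).symm
  · right
    obtain ⟨xbar, hxA, hxZ⟩ := Set.not_subset.1 hAZ
    obtain ⟨y, hxy⟩ := not_forall.1 (mt mem_center_iff.2 hxZ)
    obtain ⟨x, rfl⟩ := QuotientGroup.mk_surjective xbar
    obtain ⟨y, rfl⟩ := QuotientGroup.mk_surjective y
    let π := QuotientGroup.mk' (N.subgroupOf H)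
    refine ⟨(A.comap π).map H.subtype, fun n hn => ?_, map_subtype_le _, ?_, ?_,
      x, ⟨x, hxA, rfl⟩, y, y.2, fun hxy' => hxy ((hcomm x y).2 hxy').symm⟩
    · have hπn : π ⟨n, hNH.1 hn⟩ = 1 := (QuotientGroup.eq_one_iff _).2 hn
      exact ⟨⟨n, hNH.1 hn⟩, show π _ ∈ A from hπn ▸ A.one_mem, rfl⟩
    · rintro g hg _ ⟨a, ha, rfl⟩
      exact ⟨⟨g, hg⟩ * a * ⟨g, hg⟩⁻¹, (hA.comap π).conj_mem a ha _, rfl⟩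
    · rintro _ ⟨a, ha, rfl⟩ _ ⟨b, hb, rfl⟩
      exact (hcomm a b).1 (setLike_mul_comm (s := A) ha hb)

end ClassC

open GenStrongMonomial in
/-- Every finite solvable group all of whose elements have prime power
order belongs to the class `𝒞`. -/
theorem solvable_primePowerOrders_mem_classC (G : Type) [Group G] [Fintype G]
    (hsolv : IsSolvable G)
    (hpp : ∀ g : G, g = 1 ∨ IsPrimePow (orderOf g)) :
    InClassC G := by
  have : Group.IsSolvable G := hsolv
  refine inClassC_of_forall_quotient fun H N _ => or_iff_not_imp_left.2 fun hZ => ?_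
  have hQ : IsEPPOGroup (H ⧸ N) :=
    (IsEPPOGroup.of_injective H.subtype_injective hpp).of_surjective
      (QuotientGroup.mk'_surjective N)
  exact hQ.exists_normal_isMulCommutative_not_le_center hZ
end
end

section
/- Let G be a finite group, N ⊴ G, and let φ be a linear complex character of N. Then the inertia group I_G(φ) is a normal subgroup of N_G(ker φ), the normalizer in G of the kernel of φ. -/
/- Common framework for formalizing "A generalization of strongly monomial groups"
   (Bakshi–Kaur).  The rational group algebra ℚG is modelled inside the complex
   group algebra `MonoidAlgebra ℂ G` (rationality of coefficients is imposed
   explicitly where the statements require it). -/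

noncomputable section

open MonoidAlgebra

attribute [local instance] Classical.propDecidable

/- If `φ` is a linear character of `N` with kernel `K`, then `φ^t = φ` says exactly that
`φ(t n t⁻¹ n⁻¹) = 1`, so `I_G(φ)` consists of the `t` with `⁅t, N⁆ ⊆ K`. Such `t` normalize `K`
because `t k t⁻¹ = ⁅t, k⁆ k`, and the condition is stable under conjugation by any `x`
normalizing `K` because `⁅x t x⁻¹, n⁆ = x ⁅t, x⁻¹ n x⁆ x⁻¹`. -/

open scoped commutatorElement

namespace Subgroup

variable {G : Type*} [Group G] {K N : Subgroup G}

theorem mem_normalizer_of_forall_commutator_mem (hN : N.Normal) (hKN : K ≤ N) {t : G}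
    (ht : ∀ n ∈ N, ⁅t, n⁆ ∈ K) : t ∈ normalizer (K : Set G) := by
  refine mem_normalizer_iff.2 fun n => ?_
  have hconj : t * n * t⁻¹ = ⁅t, n⁆ * n := by group
  constructor
  · intro hn
    rw [hconj]
    exact K.mul_mem (ht n (hKN hn)) hn
  · intro hn
    have hnN : n ∈ N := by
      simpa [mul_assoc] using hN.conj_mem _ (hKN hn) t⁻¹
    rw [hconj] at hn
    exact (K.mul_mem_cancel_left (ht n hnN)).1 hn

theorem forall_commutator_conj_mem (hN : N.Normal) {x t : G} (hx : x ∈ normalizer (K : Set G))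
    (ht : ∀ n ∈ N, ⁅t, n⁆ ∈ K) : ∀ n ∈ N, ⁅x * t * x⁻¹, n⁆ ∈ K := by
  intro n hn
  have hcomm : ⁅x * t * x⁻¹, n⁆ = x * ⁅t, x⁻¹ * n * x⁆ * x⁻¹ := by group
  rw [hcomm, ← mem_normalizer_iff.1 hx]
  exact ht _ (by simpa using hN.conj_mem n hn x⁻¹)

theorem coe_map_subtype_ker {M : Type*} [Monoid M] (f : N →* M) :
    (f.ker.map N.subtype : Set G) = {g : G | ∃ h : g ∈ N, f ⟨g, h⟩ = f 1} := by
  ext g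
  simp

end Subgroup

namespace GenStrongMonomial

variable {G : Type} [Group G] {N : Subgroup G}

theorem mem_inertia_iff_forall_commutator_mem (hN : N.Normal) (f : N →* ℂ) {t : G} :
    t ∈ inertia N hN f ↔ ∀ n ∈ N, ⁅t, n⁆ ∈ f.ker.map N.subtype := by
  change conjCharN N hN f t = f ↔ _
  rw [funext_iff, Subtype.forall]
  refine forall₂_congr fun n hn => ?_
  have hcomm : ⁅t, n⁆ = N.subtype (⟨t * n * t⁻¹, hN.conj_mem n hn t⟩ * ⟨n, hn⟩⁻¹) := rfl
  rw [hcomm, Subgroup.mem_map_iff_mem N.subtype_injective, f.normal_ker.mem_comm_iff, ← f.eq_iff]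
  rfl

end GenStrongMonomial

open GenStrongMonomial in
theorem inertia_normal_in_normalizer_ker_general (G : Type) [Group G]
    (N : Subgroup G) (hN : N.Normal)
    (φ : ↥N → ℂ) (hmul : ∀ a b : ↥N, φ (a * b) = φ a * φ b) (hdeg : φ 1 = 1) :
    inertia N hN φ ≤
        Subgroup.setNormalizer {g : G | ∃ h : g ∈ N, φ ⟨g, h⟩ = φ 1} ∧
      ∀ x ∈ Subgroup.setNormalizer {g : G | ∃ h : g ∈ N, φ ⟨g, h⟩ = φ 1},
        ∀ t ∈ inertia N hN φ, x * t * x⁻¹ ∈ inertia N hN φ := by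
  let χ : N →* ℂ := { toFun := φ, map_one' := hdeg, map_mul' := hmul }
  have hI (t : G) : t ∈ inertia N hN φ ↔ ∀ n ∈ N, ⁅t, n⁆ ∈ χ.ker.map N.subtype :=
    mem_inertia_iff_forall_commutator_mem hN χ
  rw [show {g : G | ∃ h : g ∈ N, φ ⟨g, h⟩ = φ 1} = (χ.ker.map N.subtype : Set G) from
    (Subgroup.coe_map_subtype_ker χ).symm]
  exact ⟨fun t ht => Subgroup.mem_normalizer_of_forall_commutator_mem hN (N.map_subtype_le _)
      ((hI t).1 ht),
    fun x hx t ht => (hI _).2 (Subgroup.forall_commutator_conj_mem hN hx ((hI t).1 ht))⟩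

open GenStrongMonomial in
/-- for a linear character `φ` of `N ⊴ G`, the inertia group `I_G(φ)`
is a normal subgroup of `N_G(ker φ)`. -/
theorem inertia_normal_in_normalizer_ker (G : Type) [Group G] [Fintype G]
    (N : Subgroup G) (hN : N.Normal)
    (φ : ↥N → ℂ) (hmul : ∀ a b : ↥N, φ (a * b) = φ a * φ b) (hdeg : φ 1 = 1) :
    inertia N hN φ ≤
        Subgroup.setNormalizer {g : G | ∃ h : g ∈ N, φ ⟨g, h⟩ = φ 1} ∧
      ∀ x ∈ Subgroup.setNormalizer {g : G | ∃ h : g ∈ N, φ ⟨g, h⟩ = φ 1},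
        ∀ t ∈ inertia N hN φ, x * t * x⁻¹ ∈ inertia N hN φ :=
  inertia_normal_in_normalizer_ker_general G N hN φ hmul hdeg
end
end

section
/- Let G be a finite group, χ ∈ Irr(G), N ⊴ G, let φ be a linear irreducible constituent of χ_N, and let ψ ∈ Irr(I_G(φ)) be the Clifford correspondent of χ with respect to φ. Then for every g ∈ G \ N_G(ker φ), the idempotents e_ℚ(ψ) and e_ℚ(ψ)^g of ℚG are mutually orthogonal, i.e., e_ℚ(ψ)·e_ℚ(ψ)^g = 0. -/
/- Common framework for formalizing "A generalization of strongly monomial groups"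
   (Bakshi–Kaur).  The rational group algebra ℚG is modelled inside the complex
   group algebra `MonoidAlgebra ℂ G` (rationality of coefficients is imposed
   explicitly where the statements require it). -/

noncomputable section

open MonoidAlgebra

attribute [local instance] Classical.propDecidable

/-
Since `φ` is linear and `I_G(φ)`-invariant, Schur's lemma forces the representation
affording `ψ` to act on `N` through the scalars `φ`. Hence `ψ(xk) = ψ(x)` for `k ∈ ker φ`, so
`e = e_ℚ(ψ)` is absorbed by `ker φ`, and `ψ(kx) = φ(k)ψ(x)` for `k ∈ N`. For `g ∉ N_G(ker φ)` the
subgroup `K = g⁻¹(ker φ)g ≤ N` is not contained in `ker φ`, so `φ` is a nontrivial linear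
character of `K` and `∑_{k ∈ K} e k = 0`. Every `k ∈ K` fixes `e^g` from the left, so
`|K| e e^g = ∑_{k ∈ K} e k e^g = 0`.
-/

open CategoryTheory

theorem Subgroup.exists_conj_mem_not_mem_of_not_mem_normalizer {G : Type*} [Group G] [Finite G]
    {K : Subgroup G} {g : G} (hg : g ∉ Subgroup.normalizer (K : Set G)) :
    ∃ k, g * k * g⁻¹ ∈ K ∧ k ∉ K := by
  by_contra! h
  have hcard : Nat.card K ≤ Nat.card (K.comap (MulAut.conj g).toMonoidHom) := by
    rw [Subgroup.comap_equiv_eq_map_symm', Subgroup.card_map_of_injective (MulEquiv.injective _)]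
  have hK := Subgroup.eq_of_le_of_card_ge (fun k hk => h k hk) hcard
  exact hg fun n => (SetLike.ext_iff.mp hK n).symm

lemma MonoidHom.star_mul_self_of_finite {M : Type*} [Group M] [Finite M] (φ : M →* ℂ) (m : M) :
    star (φ m) * φ m = 1 := by
  have hpow : φ m ^ Nat.card M = 1 := by rw [← map_pow, pow_card_eq_one', map_one]
  have hnorm : ‖φ m‖ = 1 := Complex.norm_eq_one_of_pow_eq_one hpow Nat.card_pos.ne'
  rw [mul_comm, RCLike.star_def, Complex.mul_conj, Complex.normSq_eq_norm_sq, hnorm]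
  norm_num

namespace FDRep

variable {H : Type} [Group H] (V : FDRep ℂ H)

lemma character_mul_of_ρ_eq_smul {m : H} {c : ℂ} (hm : V.ρ m = c • 1) (h : H) :
    V.character (h * m) = V.character h * c := by
  rw [character, map_mul, hm, mul_smul_comm, mul_one, map_smul, smul_eq_mul, mul_comm]
  rfl

lemma character_mul_of_ρ_eq_smul' {m : H} {c : ℂ} (hm : V.ρ m = c • 1) (h : H) :
    V.character (m * h) = c * V.character h := by
  rw [char_mul_comm, character_mul_of_ρ_eq_smul V hm, mul_comm]

/-- `T = ∑ m, star (φ m) • ρ m` commutes with `ρ` by invariance of `φ`, so it is a scalar by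
Schur's lemma, nonzero by its trace; and `ρ m * T = φ m • T`. -/
theorem ρ_eq_smul_of_sum_character_mul_star_ne_zero [Simple V] {M : Subgroup H} [M.Normal]
    [Fintype M] (φ : M →* ℂ) (hφ : ∀ h m, φ (MulAut.conjNormal h m) = φ m)
    (hV : ∑ m : M, V.character m * star (φ m) ≠ 0) (m : M) :
    V.ρ m = φ m • 1 := by
  set T : V →ₗ[ℂ] V := ∑ m : M, star (φ m) • V.ρ m with hT
  have hcomm (h : H) : V.ρ h * T = T * V.ρ h := by
    simp only [hT, Finset.mul_sum, Finset.sum_mul, mul_smul_comm, smul_mul_assoc, ← map_mul]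
    refine Fintype.sum_equiv (MulAut.conjNormal h).toEquiv _ _ fun m => ?_
    simp only [MulEquiv.toEquiv_eq_coe, MulEquiv.coe_toEquiv, hφ, MulAut.conjNormal_apply,
      inv_mul_cancel_right]
  obtain ⟨c, hc⟩ : ∃ c : ℂ, T = c • 1 := by
    let f : V ⟶ V := ⟨ObjectProperty.homMk (ModuleCat.ofHom T),
      fun h => by ext v; exact LinearMap.congr_fun (hcomm h).symm v⟩
    obtain ⟨c, hc⟩ := endomorphism_simple_eq_smul_id ℂ f
    exact ⟨c, (congrArg (fun f : V ⟶ V => f.hom.hom.hom) hc).symm⟩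
  have hc0 : c ≠ 0 := by
    rintro rfl
    apply hV
    have htr := congrArg (LinearMap.trace ℂ V) hc
    simp only [hT, map_sum, map_smul, zero_smul, map_zero, smul_eq_mul] at htr
    rw [← htr]
    exact Finset.sum_congr rfl fun m _ => mul_comm _ _
  have hshift (m₀ : M) : V.ρ m₀ * T = φ m₀ • T := by
    rw [hT, Finset.mul_sum, Finset.smul_sum]
    refine Fintype.sum_equiv (Equiv.mulLeft m₀) _ _ fun m => ?_
    simp only [Equiv.coe_mulLeft]
    rw [mul_smul_comm, ← map_mul, smul_smul, map_mul φ, star_mul', ← mul_assoc, mul_comm (φ m₀),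
      φ.star_mul_self_of_finite, one_mul]
    rfl
  have := hshift m
  rw [hc, mul_smul_comm, mul_one, smul_comm] at this
  exact smul_right_injective _ hc0 this

end FDRep

namespace MonoidAlgebra

variable {R G : Type*} [Semiring R] [Group G]

lemma sum_single_inv_mul_single [Fintype G] (c : G → R) (k : G) :
    (∑ x, single x⁻¹ (c x)) * single k 1 = ∑ x, single x⁻¹ (c (k * x)) := by
  rw [Finset.sum_mul]
  refine Fintype.sum_equiv (Equiv.mulLeft k⁻¹) _ _ fun x => ?_
  simp [single_mul_single]

lemma single_mul_sum_single_inv [Fintype G] (c : G → R) (k : G) :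
    single k 1 * ∑ x, single x⁻¹ (c x) = ∑ x, single x⁻¹ (c (x * k)) := by
  rw [Finset.mul_sum]
  refine Fintype.sum_equiv (Equiv.mulRight k⁻¹) _ _ fun x => ?_
  simp [single_mul_single]

lemma mul_eq_zero_of_sum_mul_single_eq_zero {𝕜 : Type*} [Field 𝕜] [CharZero 𝕜] {K : Subgroup G}
    [Fintype K] {a b : MonoidAlgebra 𝕜 G} (ha : ∑ x : K, a * single (x : G) 1 = 0)
    (hb : ∀ x ∈ K, single x 1 * b = b) : a * b = 0 := by
  have hsum : ∑ _x : K, a * b = 0 := by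
    rw [← zero_mul b, ← ha, Finset.sum_mul]
    exact Finset.sum_congr rfl fun x _ => by rw [mul_assoc, hb x x.2]
  rw [Finset.sum_const, Finset.card_univ, ← Nat.cast_smul_eq_nsmul 𝕜] at hsum
  exact (smul_eq_zero.mp hsum).resolve_left (Nat.cast_ne_zero.mpr Fintype.card_ne_zero)

end MonoidAlgebra

namespace GenStrongMonomial

lemma galSum_congr {α : Type} (ψ : α → ℂ) {a b : α} (h : ψ a = ψ b) : galSum ψ a = galSum ψ b := by
  have : (⟨ψ a, mem_ratField ψ a⟩ : ratField ψ) = ⟨ψ b, mem_ratField ψ b⟩ := Subtype.ext h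
  simp only [galSum, this]

/-- When `Gal(ℚ(ψ)/ℚ)` is infinite every nonzero orbit is infinite, so `galSum` is the junk
value `0` of `finsum`. -/
lemma galSum_eq_zero_of_infinite {α : Type} (ψ : α → ℂ)
    [Infinite (ratField ψ ≃ₐ[ℚ] ratField ψ)] (a : α) : galSum ψ a = 0 := by
  by_cases ha : ψ a = 0
  · have : (⟨ψ a, mem_ratField ψ a⟩ : ratField ψ) = 0 := Subtype.ext ha
    simp [galSum, this]
  · apply finsum_of_infinite_support
    convert Set.infinite_univ (α := ratField ψ ≃ₐ[ℚ] ratField ψ)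
    refine Set.eq_univ_of_forall fun σ hσ => ha ?_
    have : σ ⟨ψ a, mem_ratField ψ a⟩ = σ 0 := by rw [map_zero]; exact Subtype.ext hσ
    exact congrArg Subtype.val (σ.injective this)

lemma sum_galSum_eq_zero {α ι : Type} (ψ : α → ℂ) (s : Finset ι) (a : ι → α)
    (h : ∑ i ∈ s, ψ (a i) = 0) : ∑ i ∈ s, galSum ψ (a i) = 0 := by
  cases finite_or_infinite (ratField ψ ≃ₐ[ℚ] ratField ψ)
  · have := Fintype.ofFinite (ratField ψ ≃ₐ[ℚ] ratField ψ)
    have hs : ∑ i ∈ s, (⟨ψ (a i), mem_ratField ψ _⟩ : ratField ψ) = 0 := Subtype.ext (by simpa)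
    simp only [galSum, finsum_eq_sum_of_fintype]
    rw [Finset.sum_comm]
    refine Finset.sum_eq_zero fun σ _ => ?_
    rw [← AddSubmonoidClass.coe_finsetSum, ← map_sum, hs, map_zero, ZeroMemClass.coe_zero]
  · exact Finset.sum_eq_zero fun i _ => galSum_eq_zero_of_infinite ψ (a i)

section GroupAlgebra

variable {G : Type} [Group G]

def eQCoeff (S : Subgroup G) (ψ : S → ℂ) (x : G) : ℂ :=
  if h : x ∈ S then ψ 1 / (Nat.card S : ℂ) * galSum ψ ⟨x, h⟩ else 0

lemma eQCoeff_mul_right {S : Subgroup G} {ψ : S → ℂ} {k : G} (hk : k ∈ S)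
    (hψ : ∀ x : S, ψ (x * ⟨k, hk⟩) = ψ x) (x : G) : eQCoeff S ψ (x * k) = eQCoeff S ψ x := by
  by_cases hx : x ∈ S
  · rw [eQCoeff, eQCoeff, dif_pos (S.mul_mem hx hk), dif_pos hx]
    exact congrArg _ (galSum_congr ψ (hψ ⟨x, hx⟩))
  · rw [eQCoeff, eQCoeff, dif_neg ((S.mul_mem_cancel_right hk).not.mpr hx), dif_neg hx]

lemma sum_eQCoeff_mul_left_eq_zero {S K : Subgroup G} [Fintype K] {ψ : S → ℂ} (hKS : K ≤ S)
    (hψ : ∀ x : S, ∑ k : K, ψ (⟨k, hKS k.2⟩ * x) = 0) (x : G) :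
    ∑ k : K, eQCoeff S ψ (k * x) = 0 := by
  by_cases hx : x ∈ S
  · have hmem (k : K) : (k : G) * x ∈ S := S.mul_mem (hKS k.2) hx
    simp only [eQCoeff, dif_pos (hmem _), ← Finset.mul_sum]
    rw [sum_galSum_eq_zero ψ _ (fun k : K => ⟨k * x, hmem k⟩) (hψ ⟨x, hx⟩), mul_zero]
  · refine Finset.sum_eq_zero fun k _ => ?_
    rw [eQCoeff, dif_neg ((S.mul_mem_cancel_left (hKS k.2)).not.mpr hx)]

lemma single_mul_conjQA {α : MonoidAlgebra ℂ G} {g k : G} (h : single (g * k * g⁻¹) 1 * α = α) :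
    single k 1 * conjQA α g = conjQA α g := by
  have hswap : single k (1 : ℂ) * single g⁻¹ 1 = single g⁻¹ 1 * single (g * k * g⁻¹) 1 := by
    simp only [single_mul_single, mul_one]
    group
  rw [conjQA, ← mul_assoc, ← mul_assoc, hswap, mul_assoc _ _ α, h]

variable [Fintype G]

lemma eQ_eq_sum_eQCoeff (S : Subgroup G) (ψ : S → ℂ) :
    eQ S ψ = ∑ x, single x⁻¹ (eQCoeff S ψ x) :=
  rfl

lemma single_mul_eQ {S : Subgroup G} {ψ : S → ℂ} {k : G} (hk : k ∈ S)
    (hψ : ∀ x : S, ψ (x * ⟨k, hk⟩) = ψ x) : single k 1 * eQ S ψ = eQ S ψ := by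
  simp only [eQ_eq_sum_eQCoeff, MonoidAlgebra.single_mul_sum_single_inv, eQCoeff_mul_right hk hψ]

lemma sum_eQ_mul_single_eq_zero {S K : Subgroup G} [Fintype K] {ψ : S → ℂ} (hKS : K ≤ S)
    (hψ : ∀ x : S, ∑ k : K, ψ (⟨k, hKS k.2⟩ * x) = 0) :
    ∑ k : K, eQ S ψ * single (k : G) 1 = 0 := by
  simp only [eQ_eq_sum_eQCoeff, MonoidAlgebra.sum_single_inv_mul_single]
  rw [Finset.sum_comm]
  refine Finset.sum_eq_zero fun x _ => ?_
  have hsum := map_sum (singleAddHom (R := ℂ) x⁻¹) (fun k : K => eQCoeff S ψ (k * x)) Finset.univ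
  rw [singleAddHom_apply, sum_eQCoeff_mul_left_eq_zero hKS hψ, single_zero] at hsum
  exact hsum.symm

end GroupAlgebra

theorem rho_eq_smul_of_innerChar_ne_zero {G : Type} [Group G] [Fintype G] {N : Subgroup G}
    (hN : N.Normal) (φ : N →* ℂ) (V : FDRep ℂ (inertia N hN φ)) [Simple V]
    (hNI : N ≤ inertia N hN φ)
    (hV : innerChar N (fun n => V.character ⟨n, hNI n.2⟩) φ ≠ 0) (n : N) :
    V.ρ ⟨n, hNI n.2⟩ = φ n • 1 := by
  have := hN.subgroupOf (inertia N hN φ)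
  let e := Subgroup.subgroupOfEquivOfLe hNI
  refine V.ρ_eq_smul_of_sum_character_mul_star_ne_zero (φ.comp e.toMonoidHom)
    (fun h m => congrFun h.2 (e m)) ?_ (e.symm n)
  rw [innerChar, mul_ne_zero_iff] at hV
  convert hV.2 using 1
  exact Fintype.sum_equiv e.toEquiv _ _ fun m => rfl

end GenStrongMonomial

open GenStrongMonomial in
theorem eQ_orthogonal_outside_normalizer_general (G : Type) [Group G] [Fintype G]
    (N : Subgroup G) (hN : N.Normal)
    (φ : ↥N → ℂ)
    (hmul : ∀ a b : ↥N, φ (a * b) = φ a * φ b) (hdeg : φ 1 = 1)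
    (ψ : ↥(inertia N hN φ) → ℂ) (hψ : IsIrrChar ↥(inertia N hN φ) ψ)
    (hNI : N ≤ inertia N hN φ)
    (hover : innerChar ↥N (fun n => ψ ⟨↑n, hNI n.2⟩) φ ≠ 0) :
    ∀ g : G, g ∉ Subgroup.setNormalizer {x : G | ∃ h : x ∈ N, φ ⟨x, h⟩ = φ 1} →
      eQ (inertia N hN φ) ψ * conjQA (eQ (inertia N hN φ) ψ) g = 0 := by
  intro g hg
  obtain ⟨V, hV, rfl⟩ := hψ
  let φ' : N →* ℂ := { toFun := φ, map_one' := hdeg, map_mul' := hmul }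
  have hρ := rho_eq_smul_of_innerChar_ne_zero hN φ' V hNI hover
  let K := φ'.ker.map N.subtype
  have hK : {x : G | ∃ h : x ∈ N, φ ⟨x, h⟩ = φ 1} = K := by
    ext x
    simp [K, φ', hdeg]
  rw [hK] at hg
  obtain ⟨k₀, hk₀, hk₀K⟩ := Subgroup.exists_conj_mem_not_mem_of_not_mem_normalizer hg
  let K' := K.comap (MulAut.conj g).toMonoidHom
  have hK'N : K' ≤ N := fun k hk => by
    simpa [mul_assoc] using hN.conj_mem' _ (Subgroup.map_subtype_le _ hk) g
  refine MonoidAlgebra.mul_eq_zero_of_sum_mul_single_eq_zero (K := K')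
    (sum_eQ_mul_single_eq_zero (hK'N.trans hNI) fun x => ?_) fun k hk => single_mul_conjQA ?_
  · have hφK' : φ'.comp (Subgroup.inclusion hK'N) ≠ 1 := fun h =>
      hk₀K ⟨⟨k₀, hK'N hk₀⟩, MonoidHom.mem_ker.mpr (DFunLike.congr_fun h ⟨k₀, hk₀⟩), rfl⟩
    simp only [fun k : K' => V.character_mul_of_ρ_eq_smul' (hρ ⟨k, hK'N k.2⟩) x]
    rw [← Finset.sum_mul]
    exact mul_eq_zero_of_left (sum_hom_units_eq_zero _ hφK') _
  · obtain ⟨n, hn, hgkg⟩ := Subgroup.mem_map.mp hk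
    rw [show g * k * g⁻¹ = n from hgkg.symm]
    refine single_mul_eQ (hNI n.2) fun x => ?_
    rw [V.character_mul_of_ρ_eq_smul (hρ n) x, MonoidHom.mem_ker.mp hn, mul_one]

open GenStrongMonomial in
/-- for the Clifford correspondent `ψ ∈ Irr(I_G(φ))` of `χ ∈ Irr(G)`
w.r.t. a linear constituent `φ` of `χ_N`, the idempotents `e_ℚ(ψ)` and `e_ℚ(ψ)^g` are
orthogonal for every `g ∉ N_G(ker φ)`. -/
theorem eQ_orthogonal_outside_normalizer (G : Type) [Group G] [Fintype G]
    (N : Subgroup G) (hN : N.Normal)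
    (χ : G → ℂ) (hχ : IsIrrChar G χ)
    (φ : ↥N → ℂ) (hφ : IsIrrChar ↥N φ)
    (hconst : innerChar ↥N (fun n => χ ↑n) φ ≠ 0)
    (hmul : ∀ a b : ↥N, φ (a * b) = φ a * φ b) (hdeg : φ 1 = 1)
    (ψ : ↥(inertia N hN φ) → ℂ) (hψ : IsIrrChar ↥(inertia N hN φ) ψ)
    (hNI : N ≤ inertia N hN φ)
    (hover : innerChar ↥N (fun n => ψ ⟨↑n, hNI n.2⟩) φ ≠ 0)
    (hCliff : ind (inertia N hN φ) ψ = χ) :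
    ∀ g : G, g ∉ Subgroup.setNormalizer {x : G | ∃ h : x ∈ N, φ ⟨x, h⟩ = φ 1} →
      eQ (inertia N hN φ) ψ * conjQA (eQ (inertia N hN φ) ψ) g = 0 :=
  eQ_orthogonal_outside_normalizer_general G N hN φ hmul hdeg ψ hψ hNI hover
end
end
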